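/- arXiv:1009.1686 — 6 statements merged into one kernel-verified Lean document; each statement's English description precedes it below -/
import Mathlib

section
/- Let k > 2 be an integer and let G_k, G_{k+1}, …, G_n be a k-tree process. Then for every edge e = {u, v} of G_n, the number of k-cliques of G_n that contain both u and v equals (k − 1) + (k − 2) · (deg_{G_n}(e) − (k − 1)), where deg_{G_n}(e) is the embeddedness of e. -/
/-- A `k`-tree process of length `n`: a sequence of simple graphs on `ℕ` where
`G k` is the complete graph on `{0, …, k-1}`, and for `k ≤ m < n`, the graph
`G (m+1)` is obtained from `G m` by adding the new vertex `m` and joining it to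
the `k` vertices of some `k`-clique of `G m`. -/
def KTreeProcess (k n : ℕ) (G : ℕ → SimpleGraph ℕ) : Prop :=
  (∀ u v : ℕ, (G k).Adj u v ↔ u ≠ v ∧ u < k ∧ v < k) ∧
  ∀ m, k ≤ m → m < n →
    ∃ K : Finset ℕ, K ⊆ Finset.range m ∧ (G m).IsNClique k K ∧
      ∀ u v : ℕ, (G (m + 1)).Adj u v ↔
        (G m).Adj u v ∨ (u = m ∧ v ∈ K) ∨ (v = m ∧ u ∈ K)

/-- The embeddedness of the edge `{u, v}`: the number of common neighbors of `u` and `v`. -/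
noncomputable def embeddedness (G : SimpleGraph ℕ) (u v : ℕ) : ℕ :=
  {w : ℕ | G.Adj u w ∧ G.Adj v w}.ncard

private lemma finset_subset_finite (N : ℕ) :
    {s : Finset ℕ | s ⊆ Finset.range N}.Finite :=
  Set.Finite.ofFinset (Finset.range N).powerset (by simp [Finset.mem_powerset])

private lemma clique_subset {G : SimpleGraph ℕ} {N k : ℕ} (hk : 2 ≤ k)
    (hE : ∀ u v, G.Adj u v → u < N ∧ v < N) {s : Finset ℕ}
    (hs : G.IsNClique k s) : s ⊆ Finset.range N := by
  intro x hx
  obtain ⟨y, hy, hyx⟩ := Finset.exists_mem_ne (by rw [hs.2]; omega) x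
  have := hs.1 (Finset.mem_coe.2 hy) (Finset.mem_coe.2 hx) hyx
  exact Finset.mem_range.2 (hE y x this).2

private lemma edges_lt {k n : ℕ} {G : ℕ → SimpleGraph ℕ} (hG : KTreeProcess k n G) :
    ∀ m, k ≤ m → m ≤ n → ∀ u v, (G m).Adj u v → u < m ∧ v < m := by
  intro m hm
  induction m, hm using Nat.le_induction with
  | base =>
    intro _ u v h
    rw [hG.1] at h
    exact ⟨h.2.1, h.2.2⟩
  | succ m hm ih =>
    intro hmn u v h
    obtain ⟨K, hKsub, hKcl, hadj⟩ := hG.2 m hm (by omega)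
    rw [hadj] at h
    rcases h with h | ⟨rfl, hv⟩ | ⟨rfl, hu⟩
    · have := ih (by omega) u v h; omega
    · have := Finset.mem_range.1 (hKsub hv); omega
    · have := Finset.mem_range.1 (hKsub hu); omega

private lemma new_cliques {k m : ℕ} (hk : 2 < k) {Gm Gm1 : SimpleGraph ℕ}
    (hEm : ∀ u v, Gm.Adj u v → u < m ∧ v < m)
    {K : Finset ℕ} (hKsub : K ⊆ Finset.range m) (hKcl : Gm.IsNClique k K)
    (hadj : ∀ u v, Gm1.Adj u v ↔ Gm.Adj u v ∨ (u = m ∧ v ∈ K) ∨ (v = m ∧ u ∈ K))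
    (s : Finset ℕ) :
    (Gm1.IsNClique k s ∧ m ∈ s) ↔ ∃ w ∈ K, s = insert m (K.erase w) := by
  have hmK : m ∉ K := fun h => by simpa using Finset.mem_range.1 (hKsub h)
  constructor
  · rintro ⟨hs, hms⟩
    have htsub : s.erase m ⊆ K := by
      intro x hx
      obtain ⟨hxm, hxs⟩ := Finset.mem_erase.1 hx
      have hadjmx : Gm1.Adj m x :=
        hs.1 (Finset.mem_coe.2 hms) (Finset.mem_coe.2 hxs) (Ne.symm hxm)
      rcases (hadj m x).1 hadjmx with h | ⟨-, h⟩ | ⟨h, -⟩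
      · exact absurd (hEm m x h).1 (lt_irrefl m)
      · exact h
      · exact absurd h hxm
    have htcard : (s.erase m).card = k - 1 := by
      rw [Finset.card_erase_of_mem hms, hs.2]
    have hsd : (K \ s.erase m).card = 1 := by
      rw [Finset.card_sdiff_of_subset htsub, htcard, hKcl.2]; omega
    obtain ⟨w, hw⟩ := Finset.card_eq_one.1 hsd
    have hwK : w ∈ K := by
      have : w ∈ K \ s.erase m := by rw [hw]; exact Finset.mem_singleton_self w
      exact (Finset.mem_sdiff.1 this).1
    refine ⟨w, hwK, ?_⟩
    have hte : s.erase m = K.erase w := by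
      ext x
      constructor
      · intro hx
        refine Finset.mem_erase.2 ⟨?_, htsub hx⟩
        rintro rfl
        have hx' : x ∈ K \ s.erase m := by rw [hw]; exact Finset.mem_singleton_self x
        exact (Finset.mem_sdiff.1 hx').2 hx
      · intro hx
        obtain ⟨hxw, hxK⟩ := Finset.mem_erase.1 hx
        by_contra hxt
        have : x ∈ K \ s.erase m := Finset.mem_sdiff.2 ⟨hxK, hxt⟩
        rw [hw] at this
        exact hxw (Finset.mem_singleton.1 this)
    rw [← hte, Finset.insert_erase hms]
  · rintro ⟨w, hwK, rfl⟩
    have hmKe : m ∉ K.erase w := fun h => hmK (Finset.mem_of_mem_erase h)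
    refine ⟨⟨?_, ?_⟩, Finset.mem_insert_self m _⟩
    · intro x hx y hy hxy
      simp only [Finset.coe_insert, Set.mem_insert_iff, Finset.mem_coe] at hx hy
      rcases hx with rfl | hx
      · rcases hy with rfl | hy
        · exact absurd rfl hxy
        · exact (hadj x y).2 (Or.inr (Or.inl ⟨rfl, Finset.mem_of_mem_erase hy⟩))
      · rcases hy with rfl | hy
        · exact (hadj x y).2 (Or.inr (Or.inr ⟨rfl, Finset.mem_of_mem_erase hx⟩))
        · exact (hadj x y).2 (Or.inl (hKcl.1 (Finset.mem_coe.2 (Finset.mem_of_mem_erase hx))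
            (Finset.mem_coe.2 (Finset.mem_of_mem_erase hy)) hxy))
    · rw [Finset.card_insert_of_notMem hmKe, Finset.card_erase_of_mem hwK, hKcl.2]
      omega

private lemma insert_erase_injOn {k m : ℕ} {K : Finset ℕ} (hmK : m ∉ K) :
    Set.InjOn (fun w => insert m (K.erase w)) ↑K := by
  intro w1 h1 w2 h2 he
  simp only at he
  have h1' : m ∉ K.erase w1 := fun h => hmK (Finset.mem_of_mem_erase h)
  have h2' : m ∉ K.erase w2 := fun h => hmK (Finset.mem_of_mem_erase h)
  have : K.erase w1 = K.erase w2 := by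
    rw [← Finset.erase_insert h1', ← Finset.erase_insert h2', he]
  by_contra hne
  have hw2 : w2 ∈ K.erase w2 := by
    rw [← this]
    exact Finset.mem_erase.2 ⟨fun h => hne h.symm, Finset.mem_coe.1 h2⟩
  exact absurd hw2 (Finset.notMem_erase w2 K)

private lemma main_count {k n : ℕ} (hk : 2 < k) {G : ℕ → SimpleGraph ℕ}
    (hG : KTreeProcess k n G) :
    ∀ m, k ≤ m → m ≤ n → ∀ u v, (G m).Adj u v →
      ({s : Finset ℕ | (G m).IsNClique k s ∧ u ∈ s ∧ v ∈ s}.ncard : ℤ) =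
        ((k : ℤ) - 1) + ((k : ℤ) - 2) * ((embeddedness (G m) u v : ℤ) - ((k : ℤ) - 1)) := by
  intro m hm
  induction m, hm using Nat.le_induction with
  | base =>
    intro _ u v huv
    rw [hG.1] at huv
    obtain ⟨hne, hu, hv⟩ := huv
    have hset : {s : Finset ℕ | (G k).IsNClique k s ∧ u ∈ s ∧ v ∈ s} = {Finset.range k} := by
      ext s
      simp only [Set.mem_setOf_eq, Set.mem_singleton_iff]
      constructor
      · rintro ⟨hs, -, -⟩
        have hsub : s ⊆ Finset.range k :=
          clique_subset (by omega) (fun a b h => by rw [hG.1] at h; exact ⟨h.2.1, h.2.2⟩) hs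
        exact Finset.eq_of_subset_of_card_le hsub (by rw [hs.2, Finset.card_range])
      · rintro rfl
        refine ⟨⟨?_, Finset.card_range k⟩, Finset.mem_range.2 hu, Finset.mem_range.2 hv⟩
        intro x hx y hy hxy
        rw [hG.1]
        exact ⟨hxy, Finset.mem_range.1 (Finset.mem_coe.1 hx),
          Finset.mem_range.1 (Finset.mem_coe.1 hy)⟩
    have hemb : embeddedness (G k) u v = k - 2 := by
      have he : {w : ℕ | (G k).Adj u w ∧ (G k).Adj v w}
          = ↑(((Finset.range k).erase u).erase v) := by
        ext w
        simp only [Set.mem_setOf_eq, hG.1, Finset.coe_erase, Set.mem_diff,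
          Finset.coe_range, Set.mem_Iio, Set.mem_singleton_iff]
        omega
      rw [embeddedness, he, Set.ncard_coe_finset,
        Finset.card_erase_of_mem (Finset.mem_erase.2 ⟨Ne.symm hne, Finset.mem_range.2 hv⟩),
        Finset.card_erase_of_mem (Finset.mem_range.2 hu), Finset.card_range]
      omega
    rw [hset, hemb, Set.ncard_singleton]
    have h2 : ((k - 2 : ℕ) : ℤ) = (k : ℤ) - 2 := by omega
    rw [h2]; ring
  | succ m hm ih =>
    intro hmn u v huv
    obtain ⟨K, hKsub, hKcl, hadj⟩ := hG.2 m hm (by omega)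
    have hmn' : m ≤ n := by omega
    have hEm : ∀ a b, (G m).Adj a b → a < m ∧ b < m := edges_lt hG m hm hmn'
    have hmK : m ∉ K := fun h => by simpa using Finset.mem_range.1 (hKsub h)
    have hnew := new_cliques hk hEm hKsub hKcl hadj
    have hinj := insert_erase_injOn (k := k) (m := m) hmK
    have hAdjm : ∀ w, (G (m+1)).Adj m w ↔ w ∈ K := by
      intro w
      rw [hadj]
      constructor
      · rintro (h | ⟨-, h⟩ | ⟨rfl, h⟩)
        · exact absurd (hEm m w h).1 (lt_irrefl m)
        · exact h
        · exact absurd h hmK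
      · exact fun h => Or.inr (Or.inl ⟨rfl, h⟩)
    -- key: the formula for the new edges {m, w}, w ∈ K
    have key : ∀ w ∈ K,
        ({s : Finset ℕ | (G (m+1)).IsNClique k s ∧ m ∈ s ∧ w ∈ s}.ncard : ℤ) =
          ((k : ℤ) - 1) + ((k : ℤ) - 2) *
            ((embeddedness (G (m+1)) m w : ℤ) - ((k : ℤ) - 1)) := by
      intro w hwK
      have hwm : w ≠ m := fun h => hmK (h ▸ hwK)
      have hCset : {s : Finset ℕ | (G (m+1)).IsNClique k s ∧ m ∈ s ∧ w ∈ s}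
          = (fun x => insert m (K.erase x)) '' ↑(K.erase w) := by
        ext s
        simp only [Set.mem_setOf_eq, Set.mem_image, Finset.mem_coe, Finset.mem_erase]
        constructor
        · rintro ⟨hs, hms, hws⟩
          obtain ⟨x, hxK, rfl⟩ := (hnew s).1 ⟨hs, hms⟩
          refine ⟨x, ⟨?_, hxK⟩, rfl⟩
          rcases Finset.mem_insert.1 hws with h | h
          · exact absurd h hwm
          · exact fun e => (Finset.mem_erase.1 h).1 e.symm
        · rintro ⟨x, ⟨hxw, hxK⟩, rfl⟩
          obtain ⟨hcl, hms⟩ := (hnew _).2 ⟨x, hxK, rfl⟩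
          exact ⟨hcl, hms, Finset.mem_insert.2 (Or.inr
            (Finset.mem_erase.2 ⟨fun e => hxw e.symm, hwK⟩))⟩
      have hEset : {x : ℕ | (G (m+1)).Adj m x ∧ (G (m+1)).Adj w x} = ↑(K.erase w) := by
        ext x
        simp only [Set.mem_setOf_eq, Finset.coe_erase, Set.mem_diff, Finset.mem_coe,
          Set.mem_singleton_iff]
        constructor
        · rintro ⟨h1, h2⟩
          exact ⟨(hAdjm x).1 h1, fun e => (G (m+1)).irrefl (e ▸ h2)⟩
        · rintro ⟨hxK, hxw⟩
          refine ⟨(hAdjm x).2 hxK, (hadj w x).2 (Or.inl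
            (hKcl.1 (Finset.mem_coe.2 hwK) (Finset.mem_coe.2 hxK) (fun e => hxw e.symm)))⟩
      have hc1 : {s : Finset ℕ | (G (m+1)).IsNClique k s ∧ m ∈ s ∧ w ∈ s}.ncard = k - 1 := by
        rw [hCset, Set.ncard_image_of_injOn (hinj.mono (by
          intro x hx; exact Finset.mem_coe.2 (Finset.mem_of_mem_erase (Finset.mem_coe.1 hx)))),
          Set.ncard_coe_finset, Finset.card_erase_of_mem hwK, hKcl.2]
      have hc2 : embeddedness (G (m+1)) m w = k - 1 := by
        rw [embeddedness, hEset, Set.ncard_coe_finset, Finset.card_erase_of_mem hwK, hKcl.2]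
      rw [hc1, hc2]
      have h1 : ((k - 1 : ℕ) : ℤ) = (k : ℤ) - 1 := by omega
      rw [h1]; ring
    by_cases hum : u = m
    · subst hum
      exact key v ((hAdjm v).1 huv)
    by_cases hvm : v = m
    · have huK : u ∈ K := (hAdjm u).1 (hvm ▸ huv.symm)
      have hsets : {s : Finset ℕ | (G (m+1)).IsNClique k s ∧ u ∈ s ∧ v ∈ s}
          = {s : Finset ℕ | (G (m+1)).IsNClique k s ∧ m ∈ s ∧ u ∈ s} := by
        subst hvm
        ext s
        simp only [Set.mem_setOf_eq]
        exact ⟨fun ⟨a, b, c⟩ => ⟨a, c, b⟩, fun ⟨a, b, c⟩ => ⟨a, c, b⟩⟩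
      have hemb : embeddedness (G (m+1)) u v = embeddedness (G (m+1)) m u := by
        subst hvm
        rw [embeddedness, embeddedness]
        congr 1
        ext x
        simp only [Set.mem_setOf_eq]
        exact and_comm
      rw [hsets, hemb]
      exact key u huK
    -- main case: old edge
    have huvm : (G m).Adj u v := by
      rcases (hadj u v).1 huv with h | ⟨h, -⟩ | ⟨h, -⟩
      · exact h
      · exact absurd h hum
      · exact absurd h hvm
    have hu : u < m := (hEm u v huvm).1
    have hv : v < m := (hEm u v huvm).2
    have hAdju : ∀ x, (G (m+1)).Adj u x ↔ (G m).Adj u x ∨ (x = m ∧ u ∈ K) := by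
      intro x
      rw [hadj]
      constructor
      · rintro (h | ⟨h, -⟩ | ⟨h1, h2⟩)
        · exact Or.inl h
        · exact absurd h hum
        · exact Or.inr ⟨h1, h2⟩
      · rintro (h | ⟨h1, h2⟩)
        · exact Or.inl h
        · exact Or.inr (Or.inr ⟨h1, h2⟩)
    have hAdjv : ∀ x, (G (m+1)).Adj v x ↔ (G m).Adj v x ∨ (x = m ∧ v ∈ K) := by
      intro x
      rw [hadj]
      constructor
      · rintro (h | ⟨h, -⟩ | ⟨h1, h2⟩)
        · exact Or.inl h
        · exact absurd h hvm
        · exact Or.inr ⟨h1, h2⟩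
      · rintro (h | ⟨h1, h2⟩)
        · exact Or.inl h
        · exact Or.inr (Or.inr ⟨h1, h2⟩)
    set A := {s : Finset ℕ | (G m).IsNClique k s ∧ u ∈ s ∧ v ∈ s} with hA
    set B := {s : Finset ℕ | (G (m+1)).IsNClique k s ∧ u ∈ s ∧ v ∈ s ∧ m ∈ s} with hB
    have hAsub : ∀ s ∈ A, s ⊆ Finset.range m := fun s hs =>
      clique_subset (by omega) hEm hs.1
    have hCunion : {s : Finset ℕ | (G (m+1)).IsNClique k s ∧ u ∈ s ∧ v ∈ s} = A ∪ B := by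
      ext s
      simp only [Set.mem_setOf_eq, Set.mem_union, hA, hB]
      constructor
      · rintro ⟨hs, hus, hvs⟩
        by_cases hms : m ∈ s
        · exact Or.inr ⟨hs, hus, hvs, hms⟩
        · refine Or.inl ⟨⟨?_, hs.2⟩, hus, hvs⟩
          intro x hx y hy hxy
          rcases (hadj x y).1 (hs.1 hx hy hxy) with h | ⟨h, -⟩ | ⟨h, -⟩
          · exact h
          · exact absurd (Finset.mem_coe.1 (h ▸ hx)) hms
          · exact absurd (Finset.mem_coe.1 (h ▸ hy)) hms
      · rintro (⟨hs, hus, hvs⟩ | ⟨hs, hus, hvs, -⟩)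
        · exact ⟨⟨fun x hx y hy hxy => (hadj x y).2 (Or.inl (hs.1 hx hy hxy)), hs.2⟩, hus, hvs⟩
        · exact ⟨hs, hus, hvs⟩
    have hdisj : Disjoint A B := by
      rw [Set.disjoint_left]
      rintro s hsA ⟨-, -, -, hms⟩
      exact absurd (Finset.mem_range.1 (hAsub s hsA hms)) (lt_irrefl m)
    have hAfin : A.Finite := (finset_subset_finite m).subset hAsub
    have hBfin : B.Finite := by
      refine (finset_subset_finite (m+1)).subset ?_
      intro s hs
      exact clique_subset (by omega) (edges_lt hG (m+1) (by omega) hmn) hs.1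
    have hCcard : {s : Finset ℕ | (G (m+1)).IsNClique k s ∧ u ∈ s ∧ v ∈ s}.ncard
        = A.ncard + B.ncard := by
      rw [hCunion, Set.ncard_union_eq hdisj hAfin hBfin]
    set E := {x : ℕ | (G m).Adj u x ∧ (G m).Adj v x} with hE
    have hEfin : E.Finite := by
      refine (Finset.range m).finite_toSet.subset ?_
      rintro x ⟨h, -⟩
      exact Finset.mem_coe.2 (Finset.mem_range.2 (hEm u x h).2)
    have hmE : m ∉ E := fun h => absurd (hEm u m h.1).2 (lt_irrefl m)
    have ihm := ih hmn' u v huvm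
    rw [hCcard]
    by_cases hK : u ∈ K ∧ v ∈ K
    · -- new common neighbor m, and k-2 new cliques
      have hBset : B = (fun x => insert m (K.erase x)) '' ↑((K.erase u).erase v) := by
        ext s
        simp only [Set.mem_setOf_eq, Set.mem_image, Finset.mem_coe, Finset.mem_erase, hB]
        constructor
        · rintro ⟨hs, hus, hvs, hms⟩
          obtain ⟨x, hxK, rfl⟩ := (hnew s).1 ⟨hs, hms⟩
          have hxu : x ≠ u := by
            rcases Finset.mem_insert.1 hus with h | h
            · exact absurd h hum
            · exact fun e => (Finset.mem_erase.1 h).1 e.symm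
          have hxv : x ≠ v := by
            rcases Finset.mem_insert.1 hvs with h | h
            · exact absurd h hvm
            · exact fun e => (Finset.mem_erase.1 h).1 e.symm
          exact ⟨x, ⟨hxv, hxu, hxK⟩, rfl⟩
        · rintro ⟨x, ⟨hxv, hxu, hxK⟩, rfl⟩
          obtain ⟨hcl, hms⟩ := (hnew _).2 ⟨x, hxK, rfl⟩
          refine ⟨hcl, ?_, ?_, hms⟩
          · exact Finset.mem_insert.2 (Or.inr (Finset.mem_erase.2 ⟨fun e => hxu e.symm, hK.1⟩))
          · exact Finset.mem_insert.2 (Or.inr (Finset.mem_erase.2 ⟨fun e => hxv e.symm, hK.2⟩))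
      have hBcard : B.ncard = k - 2 := by
        rw [hBset, Set.ncard_image_of_injOn (hinj.mono (by
          intro x hx
          exact Finset.mem_coe.2 (Finset.mem_of_mem_erase
            (Finset.mem_of_mem_erase (Finset.mem_coe.1 hx))))),
          Set.ncard_coe_finset,
          Finset.card_erase_of_mem (Finset.mem_erase.2 ⟨huv.ne', hK.2⟩),
          Finset.card_erase_of_mem hK.1, hKcl.2]
        omega
      have hEset : {x : ℕ | (G (m+1)).Adj u x ∧ (G (m+1)).Adj v x} = insert m E := by
        ext x
        simp only [Set.mem_setOf_eq, hAdju, hAdjv, Set.mem_insert_iff, hE]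
        constructor
        · rintro ⟨h1 | ⟨rfl, -⟩, h2⟩
          · rcases h2 with h2 | ⟨rfl, -⟩
            · exact Or.inr ⟨h1, h2⟩
            · exact Or.inl rfl
          · exact Or.inl rfl
        · rintro (rfl | ⟨h1, h2⟩)
          · exact ⟨Or.inr ⟨rfl, hK.1⟩, Or.inr ⟨rfl, hK.2⟩⟩
          · exact ⟨Or.inl h1, Or.inl h2⟩
      have hembnew : embeddedness (G (m+1)) u v = embeddedness (G m) u v + 1 := by
        rw [embeddedness, hEset, Set.ncard_insert_of_notMem hmE hEfin, embeddedness]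
      rw [hembnew, hBcard]
      have h2 : ((k - 2 : ℕ) : ℤ) = (k : ℤ) - 2 := by omega
      push_cast
      rw [h2]
      linear_combination ihm
    · -- no new common neighbor, no new cliques
      have hBset : B = ∅ := by
        ext s
        simp only [Set.mem_setOf_eq, Set.mem_empty_iff_false, iff_false, hB]
        rintro ⟨hs, hus, hvs, hms⟩
        obtain ⟨x, hxK, rfl⟩ := (hnew s).1 ⟨hs, hms⟩
        have huK : u ∈ K := by
          rcases Finset.mem_insert.1 hus with h | h
          · exact absurd h hum
          · exact Finset.mem_of_mem_erase h
        have hvK : v ∈ K := by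
          rcases Finset.mem_insert.1 hvs with h | h
          · exact absurd h hvm
          · exact Finset.mem_of_mem_erase h
        exact hK ⟨huK, hvK⟩
      have hEset : {x : ℕ | (G (m+1)).Adj u x ∧ (G (m+1)).Adj v x} = E := by
        ext x
        simp only [Set.mem_setOf_eq, hAdju, hAdjv, hE]
        constructor
        · rintro ⟨h1 | ⟨rfl, hu'⟩, h2⟩
          · rcases h2 with h2 | ⟨rfl, -⟩
            · exact ⟨h1, h2⟩
            · exact absurd (hEm u x h1).2 (lt_irrefl x)
          · rcases h2 with h2 | ⟨-, hv'⟩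
            · exact absurd (hEm v x h2).2 (lt_irrefl x)
            · exact absurd ⟨hu', hv'⟩ hK
        · exact fun h => ⟨Or.inl h.1, Or.inl h.2⟩
      have hembnew : embeddedness (G (m+1)) u v = embeddedness (G m) u v := by
        rw [embeddedness, hEset, embeddedness]
      rw [hembnew, hBset, Set.ncard_empty]
      push_cast
      linear_combination ihm

theorem clique_count_of_edge (k n : ℕ) (hk : 2 < k) (hn : k ≤ n)
    (G : ℕ → SimpleGraph ℕ) (hG : KTreeProcess k n G)
    (u v : ℕ) (huv : (G n).Adj u v) :
    ({s : Finset ℕ | (G n).IsNClique k s ∧ u ∈ s ∧ v ∈ s}.ncard : ℤ) =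
      ((k : ℤ) - 1) + ((k : ℤ) - 2) * ((embeddedness (G n) u v : ℤ) - ((k : ℤ) - 1)) := by
  exact main_count hk hG n hn le_rfl u v huv
end

section
/- Let k > 2 be an integer and let G_k, …, G_n be a k-tree process. If a k-clique of G_n is chosen uniformly at random (from the nonempty finite set of all k-cliques of G_n), then for every edge e = {u, v} of G_n, the probability that the chosen k-clique contains both u and v equals ((k − 2)·deg_{G_n}(e) − (k − 1)(k − 3)) / ((n − k)·k + 1). -/
lemma clique_mem_lt {G : SimpleGraph ℕ} {k m : ℕ} (hk : 2 ≤ k)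
    (hb : ∀ u v, G.Adj u v → u < m ∧ v < m) {s : Finset ℕ}
    (hs : G.IsNClique k s) : ∀ x ∈ s, x < m := by
  intro x hx
  obtain ⟨y, hy, hyx⟩ := Finset.exists_mem_ne (by rw [hs.2]; omega) x
  exact (hb x y (hs.1 hx hy (Ne.symm hyx))).1

lemma cliques_finite {G : SimpleGraph ℕ} {k m : ℕ} (hk : 2 ≤ k)
    (hb : ∀ u v, G.Adj u v → u < m ∧ v < m) :
    {s : Finset ℕ | G.IsNClique k s}.Finite := by
  apply Set.Finite.subset (Finset.range m).powerset.finite_toSet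
  intro s hs
  simp only [Finset.coe_powerset, Set.mem_preimage, Set.mem_powerset_iff,
    Finset.coe_subset, Finset.mem_coe, Finset.mem_powerset]
  intro x hx
  exact Finset.mem_range.2 (clique_mem_lt hk hb hs x hx)

lemma cn_finite {G : SimpleGraph ℕ} {m : ℕ}
    (hb : ∀ u v, G.Adj u v → u < m ∧ v < m) (u v : ℕ) :
    {w : ℕ | G.Adj u w ∧ G.Adj v w}.Finite := by
  apply Set.Finite.subset (Set.finite_Iio m)
  intro w hw
  exact (hb u w hw.1).2

lemma embeddedness_comm (G : SimpleGraph ℕ) (u v : ℕ) :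
    embeddedness G u v = embeddedness G v u := by
  unfold embeddedness
  congr 1
  ext w
  exact and_comm

lemma sub_count {k : ℕ} {K : Finset ℕ} (hk : 1 ≤ k) (hKcard : K.card = k)
    (S : Finset ℕ) (hS : S ⊆ K) :
    {T : Finset ℕ | T ⊆ K ∧ T.card = k - 1 ∧ S ⊆ T}.Finite ∧
    {T : Finset ℕ | T ⊆ K ∧ T.card = k - 1 ∧ S ⊆ T}.ncard = k - S.card := by
  have hset : {T : Finset ℕ | T ⊆ K ∧ T.card = k - 1 ∧ S ⊆ T}
      = (fun x => K.erase x) '' ↑(K \ S) := by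
    ext T
    simp only [Set.mem_setOf_eq, Set.mem_image, Finset.mem_coe, Finset.mem_sdiff]
    constructor
    · rintro ⟨hTK, hTcard, hST⟩
      have hcards : (K \ T).card = 1 := by
        rw [Finset.card_sdiff_of_subset hTK, hKcard, hTcard]; omega
      obtain ⟨x, hx⟩ := Finset.card_eq_one.1 hcards
      have hxKT : x ∈ K \ T := hx ▸ Finset.mem_singleton_self x
      obtain ⟨hxK, hxT⟩ := Finset.mem_sdiff.1 hxKT
      refine ⟨x, ⟨hxK, fun hxS => hxT (hST hxS)⟩, ?_⟩
      have hsub : T ⊆ K.erase x := fun t ht =>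
        Finset.mem_erase.2 ⟨fun h => hxT (h ▸ ht), hTK ht⟩
      exact (Finset.eq_of_subset_of_card_le hsub (by
        rw [Finset.card_erase_of_mem hxK, hKcard, hTcard])).symm
    · rintro ⟨x, ⟨hxK, hxS⟩, rfl⟩
      exact ⟨Finset.erase_subset x K, by rw [Finset.card_erase_of_mem hxK, hKcard],
        fun s hs => Finset.mem_erase.2 ⟨fun h => hxS (h ▸ hs), hS hs⟩⟩
  have hinj : Set.InjOn (fun x => K.erase x) ↑(K \ S) := by
    intro x hx y hy hxy
    by_contra hne
    have hxK : x ∈ K := (Finset.mem_sdiff.1 hx).1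
    have : x ∈ K.erase y := Finset.mem_erase.2 ⟨hne, hxK⟩
    simp only [] at hxy
    rw [← hxy] at this
    exact (Finset.notMem_erase x K) this
  rw [hset]
  refine ⟨Set.Finite.image _ (K \ S).finite_toSet, ?_⟩
  rw [Set.ncard_image_of_injOn hinj, Set.ncard_coe_finset, Finset.card_sdiff_of_subset hS, hKcard]

section Step
variable {k m : ℕ} {G G' : SimpleGraph ℕ} {K : Finset ℕ}

-- basic consequences
lemma step_facts (hk : 2 < k) (hmk : k ≤ m)
    (hb : ∀ u v, G.Adj u v → u < m ∧ v < m)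
    (hKsub : K ⊆ Finset.range m) (hKcl : G.IsNClique k K)
    (hA : ∀ u v : ℕ, G'.Adj u v ↔ G.Adj u v ∨ (u = m ∧ v ∈ K) ∨ (v = m ∧ u ∈ K)) :
    (∀ u v, G'.Adj u v → u < m + 1 ∧ v < m + 1) ∧
    (∀ u v, u ≠ m → v ≠ m → (G'.Adj u v ↔ G.Adj u v)) ∧
    (∀ w, G'.Adj m w ↔ w ∈ K) := by
  have hKlt : ∀ x ∈ K, x < m := fun x hx => Finset.mem_range.1 (hKsub hx)
  have hmK : m ∉ K := fun h => lt_irrefl m (hKlt m h)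
  refine ⟨?_, ?_, ?_⟩
  · intro u v h
    rw [hA] at h
    rcases h with h | ⟨rfl, h⟩ | ⟨rfl, h⟩
    · have := hb u v h; omega
    · have := hKlt v h; omega
    · have := hKlt u h; omega
  · intro u v hu hv
    rw [hA]
    constructor
    · rintro (h | ⟨rfl, -⟩ | ⟨rfl, -⟩)
      · exact h
      · exact absurd rfl hu
      · exact absurd rfl hv
    · exact Or.inl
  · intro w
    rw [hA]
    constructor
    · rintro (h | ⟨-, h⟩ | ⟨rfl, h⟩)
      · exact absurd (hb m w h).1 (lt_irrefl m)
      · exact h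
      · exact absurd h hmK
    · exact fun h => Or.inr (Or.inl ⟨rfl, h⟩)

lemma step_clique_iff (hk : 2 < k) (hmk : k ≤ m)
    (hb : ∀ u v, G.Adj u v → u < m ∧ v < m)
    (hKsub : K ⊆ Finset.range m) (hKcl : G.IsNClique k K)
    (hA : ∀ u v : ℕ, G'.Adj u v ↔ G.Adj u v ∨ (u = m ∧ v ∈ K) ∨ (v = m ∧ u ∈ K)) :
    ∀ s : Finset ℕ, G'.IsNClique k s ↔
      (G.IsNClique k s ∨ ∃ T, T ⊆ K ∧ T.card = k - 1 ∧ s = insert m T) := by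
  obtain ⟨hb', hold, hAm⟩ := step_facts hk hmk hb hKsub hKcl hA
  have hKlt : ∀ x ∈ K, x < m := fun x hx => Finset.mem_range.1 (hKsub hx)
  have hmK : m ∉ K := fun h => lt_irrefl m (hKlt m h)
  intro s
  constructor
  · intro hs
    by_cases hms : m ∈ s
    · right
      refine ⟨s.erase m, ?_, ?_, (Finset.insert_erase hms).symm⟩
      · intro t ht
        obtain ⟨htm, hts⟩ := Finset.mem_erase.1 ht
        exact (hAm t).1 (hs.1 hms hts (Ne.symm htm))
      · rw [Finset.card_erase_of_mem hms, hs.2]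
    · left
      refine ⟨?_, hs.2⟩
      intro x hx y hy hxy
      have hxm : x ≠ m := fun h => hms (h ▸ hx)
      have hym : y ≠ m := fun h => hms (h ▸ hy)
      exact (hold x y hxm hym).1 (hs.1 hx hy hxy)
  · rintro (hs | ⟨T, hTK, hTcard, rfl⟩)
    · refine ⟨?_, hs.2⟩
      intro x hx y hy hxy
      exact (hA x y).2 (Or.inl (hs.1 hx hy hxy))
    · have hmT : m ∉ T := fun h => hmK (hTK h)
      constructor
      · intro x hx y hy hxy
        simp only [Finset.coe_insert, Set.mem_insert_iff, Finset.mem_coe] at hx hy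
        rcases hx with rfl | hx
        · rcases hy with rfl | hy
          · exact absurd rfl hxy
          · exact (hAm y).2 (hTK hy)
        · rcases hy with rfl | hy
          · exact ((hAm x).2 (hTK hx)).symm
          · have hxm : x ≠ m := fun h => hmT (h ▸ hx)
            have hym : y ≠ m := fun h => hmT (h ▸ hy)
            exact (hold x y hxm hym).2 (hKcl.1 (hTK hx) (hTK hy) hxy)
      · rw [Finset.card_insert_of_notMem hmT, hTcard]
        omega

end Step

lemma step_main {k m : ℕ} {G G' : SimpleGraph ℕ} {K : Finset ℕ}
    (hk : 2 < k) (hmk : k ≤ m)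
    (hb : ∀ u v, G.Adj u v → u < m ∧ v < m)
    (hcard : {s : Finset ℕ | G.IsNClique k s}.ncard = (m - k) * k + 1)
    (hedge : ∀ u v, G.Adj u v →
      {s : Finset ℕ | G.IsNClique k s ∧ u ∈ s ∧ v ∈ s}.ncard + (k-1)*(k-3)
        = (k-2) * embeddedness G u v)
    (hKsub : K ⊆ Finset.range m) (hKcl : G.IsNClique k K)
    (hA : ∀ u v : ℕ, G'.Adj u v ↔ G.Adj u v ∨ (u = m ∧ v ∈ K) ∨ (v = m ∧ u ∈ K)) :
    (∀ u v, G'.Adj u v → u < m + 1 ∧ v < m + 1) ∧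
    {s : Finset ℕ | G'.IsNClique k s}.ncard = (m + 1 - k) * k + 1 ∧
    ∀ u v, G'.Adj u v →
      {s : Finset ℕ | G'.IsNClique k s ∧ u ∈ s ∧ v ∈ s}.ncard + (k-1)*(k-3)
        = (k-2) * embeddedness G' u v := by
  obtain ⟨hb', hold, hAm⟩ := step_facts hk hmk hb hKsub hKcl hA
  have hclq := step_clique_iff hk hmk hb hKsub hKcl hA
  have hKlt : ∀ x ∈ K, x < m := fun x hx => Finset.mem_range.1 (hKsub hx)
  have hKcard : K.card = k := hKcl.2
  have hmK : m ∉ K := fun h => lt_irrefl m (hKlt m h)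
  have hclfin : {s : Finset ℕ | G.IsNClique k s}.Finite := cliques_finite (by omega) hb
  have holdnm : ∀ s : Finset ℕ, G.IsNClique k s → m ∉ s :=
    fun s hs h => lt_irrefl m (clique_mem_lt (by omega) hb hs m h)
  -- injectivity of insert m
  have hinsinj : ∀ C : Set (Finset ℕ), (∀ T ∈ C, T ⊆ K) →
      Set.InjOn (insert m) C := by
    intro C hC T hT T' hT' h
    have h1 : m ∉ T := fun hm => hmK (hC T hT hm)
    have h2 : m ∉ T' := fun hm => hmK (hC T' hT' hm)
    rw [← Finset.erase_insert h1, ← Finset.erase_insert h2, h]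
  refine ⟨hb', ?_, ?_⟩
  · -- clique count
    have hsplit : {s : Finset ℕ | G'.IsNClique k s}
        = {s : Finset ℕ | G.IsNClique k s}
          ∪ insert m '' {T : Finset ℕ | T ⊆ K ∧ T.card = k - 1 ∧ ∅ ⊆ T} := by
      ext s
      simp only [Set.mem_setOf_eq, Set.mem_union, Set.mem_image, hclq s,
        Finset.empty_subset, and_true]
      constructor
      · rintro (h | ⟨T, hT1, hT2, rfl⟩)
        · exact Or.inl h
        · exact Or.inr ⟨T, ⟨hT1, hT2⟩, rfl⟩
      · rintro (h | ⟨T, ⟨hT1, hT2⟩, rfl⟩)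
        · exact Or.inl h
        · exact Or.inr ⟨T, hT1, hT2, rfl⟩
    obtain ⟨hfin0, hcnt0⟩ := sub_count (k := k) (by omega) hKcard ∅ (Finset.empty_subset K)
    have hdisj0 : Disjoint {s : Finset ℕ | G.IsNClique k s}
        (insert m '' {T : Finset ℕ | T ⊆ K ∧ T.card = k - 1 ∧ ∅ ⊆ T}) := by
      rw [Set.disjoint_left]
      rintro s hs ⟨T, -, rfl⟩
      exact holdnm _ hs (Finset.mem_insert_self m T)
    rw [hsplit, Set.ncard_union_eq hdisj0 hclfin (hfin0.image _),
      Set.ncard_image_of_injOn (hinsinj _ (fun T hT => hT.1)), hcnt0, hcard]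
    have h1 : m + 1 - k = (m - k) + 1 := by omega
    have h2 : k - (∅ : Finset ℕ).card = k := by simp
    rw [h1, h2]; ring
  · -- edges
    -- the new-edge computation, for v ∈ K, edge (m, v)
    have hnew : ∀ v ∈ K,
        {s : Finset ℕ | G'.IsNClique k s ∧ m ∈ s ∧ v ∈ s}.ncard = k - 1 ∧
        embeddedness G' m v = k - 1 := by
      intro v hvK
      have hvm : v ≠ m := fun h => hmK (h ▸ hvK)
      constructor
      · have hsplitm : {s : Finset ℕ | G'.IsNClique k s ∧ m ∈ s ∧ v ∈ s}
            = insert m '' {T : Finset ℕ | T ⊆ K ∧ T.card = k - 1 ∧ {v} ⊆ T} := by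
          ext s
          simp only [Set.mem_setOf_eq, Set.mem_image, hclq s,
            Finset.singleton_subset_iff]
          constructor
          · rintro ⟨h | ⟨T, hT1, hT2, rfl⟩, hms, hvs⟩
            · exact absurd hms (holdnm _ h)
            · refine ⟨T, ⟨hT1, hT2, ?_⟩, rfl⟩
              rcases Finset.mem_insert.1 hvs with h | h
              · exact absurd h hvm
              · exact h
          · rintro ⟨T, ⟨hT1, hT2, hT3⟩, rfl⟩
            exact ⟨Or.inr ⟨T, hT1, hT2, rfl⟩, Finset.mem_insert_self m T,
              Finset.mem_insert_of_mem hT3⟩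
        obtain ⟨hfin1, hcnt1⟩ := sub_count (k := k) (by omega) hKcard {v}
          (Finset.singleton_subset_iff.2 hvK)
        rw [hsplitm, Set.ncard_image_of_injOn (hinsinj _ (fun T hT => hT.1)), hcnt1,
          Finset.card_singleton]
      · have hcnm : {w : ℕ | G'.Adj m w ∧ G'.Adj v w} = ↑(K.erase v) := by
          ext w
          simp only [Set.mem_setOf_eq, Finset.coe_erase, Set.mem_diff,
            Finset.mem_coe, Set.mem_singleton_iff]
          constructor
          · rintro ⟨h1, h2⟩
            exact ⟨(hAm w).1 h1, Ne.symm h2.ne⟩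
          · rintro ⟨hwK, hwv⟩
            have hwm : w ≠ m := fun h => hmK (h ▸ hwK)
            exact ⟨(hAm w).2 hwK, (hold v w hvm hwm).2 (hKcl.1 hvK hwK (Ne.symm hwv))⟩
        unfold embeddedness
        rw [hcnm, Set.ncard_coe_finset, Finset.card_erase_of_mem hvK, hKcard]
    intro u v huv
    rw [hA] at huv
    rcases huv with huv | ⟨hueq, hvK⟩ | ⟨hveq, huK⟩
    · -- old edge
      obtain ⟨hu, hv⟩ := hb u v huv
      have hum : u ≠ m := by omega
      have hvm : v ≠ m := by omega
      have hne : u ≠ v := huv.ne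
      have hsplit : {s : Finset ℕ | G'.IsNClique k s ∧ u ∈ s ∧ v ∈ s}
          = {s : Finset ℕ | G.IsNClique k s ∧ u ∈ s ∧ v ∈ s}
            ∪ insert m '' {T : Finset ℕ | T ⊆ K ∧ T.card = k - 1 ∧ {u, v} ⊆ T} := by
        ext s
        simp only [Set.mem_setOf_eq, Set.mem_union, Set.mem_image, hclq s,
          Finset.insert_subset_iff, Finset.singleton_subset_iff]
        constructor
        · rintro ⟨h | ⟨T, hT1, hT2, rfl⟩, hus, hvs⟩
          · exact Or.inl ⟨h, hus, hvs⟩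
          · refine Or.inr ⟨T, ⟨hT1, hT2, ?_, ?_⟩, rfl⟩
            · rcases Finset.mem_insert.1 hus with h | h
              · exact absurd h hum
              · exact h
            · rcases Finset.mem_insert.1 hvs with h | h
              · exact absurd h hvm
              · exact h
        · rintro (⟨h, hus, hvs⟩ | ⟨T, ⟨hT1, hT2, hT3, hT4⟩, rfl⟩)
          · exact ⟨Or.inl h, hus, hvs⟩
          · exact ⟨Or.inr ⟨T, hT1, hT2, rfl⟩, Finset.mem_insert_of_mem hT3,
              Finset.mem_insert_of_mem hT4⟩
      have hdisj1 : Disjoint {s : Finset ℕ | G.IsNClique k s ∧ u ∈ s ∧ v ∈ s}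
          (insert m '' {T : Finset ℕ | T ⊆ K ∧ T.card = k - 1 ∧ {u, v} ⊆ T}) := by
        rw [Set.disjoint_left]
        rintro s hs ⟨T, -, rfl⟩
        exact holdnm _ hs.1 (Finset.mem_insert_self m T)
      have hclefin : {s : Finset ℕ | G.IsNClique k s ∧ u ∈ s ∧ v ∈ s}.Finite :=
        hclfin.subset (fun s hs => hs.1)
      by_cases hUV : u ∈ K ∧ v ∈ K
      · obtain ⟨hfin2, hcnt2⟩ := sub_count (k := k) (by omega) hKcard {u, v}
          (Finset.insert_subset hUV.1 (Finset.singleton_subset_iff.2 hUV.2))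
        have hcard2 : ({u, v} : Finset ℕ).card = 2 := by
          rw [Finset.card_insert_of_notMem (by simpa using hne), Finset.card_singleton]
        rw [hcard2] at hcnt2
        have hcn' : {w : ℕ | G'.Adj u w ∧ G'.Adj v w}
            = insert m {w : ℕ | G.Adj u w ∧ G.Adj v w} := by
          ext w
          simp only [Set.mem_setOf_eq, Set.mem_insert_iff]
          by_cases hw : w = m
          · rw [hw]
            simp only [eq_self_iff_true, true_or, iff_true]
            exact ⟨((hAm u).2 hUV.1).symm, ((hAm v).2 hUV.2).symm⟩
          · rw [hold u w hum hw, hold v w hvm hw]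
            constructor
            · intro h; exact Or.inr h
            · rintro (h | h)
              · exact absurd h hw
              · exact h
        have hmcn : m ∉ {w : ℕ | G.Adj u w ∧ G.Adj v w} :=
          fun h => lt_irrefl m (hb u m h.1).2
        have hemb' : embeddedness G' u v = embeddedness G u v + 1 := by
          unfold embeddedness
          rw [hcn', Set.ncard_insert_of_notMem hmcn (cn_finite hb u v)]
        rw [hsplit, Set.ncard_union_eq hdisj1 hclefin (hfin2.image _),
          Set.ncard_image_of_injOn (hinsinj _ (fun T hT => hT.1)), hcnt2, hemb',
          Nat.mul_add, Nat.mul_one, ← hedge u v huv]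
        ring
      · have hempty : {T : Finset ℕ | T ⊆ K ∧ T.card = k - 1 ∧ {u, v} ⊆ T} = ∅ := by
          ext T
          simp only [Set.mem_setOf_eq, Set.mem_empty_iff_false, iff_false, not_and]
          intro hT1 hT2 hT3
          rw [Finset.insert_subset_iff, Finset.singleton_subset_iff] at hT3
          exact hUV ⟨hT1 hT3.1, hT1 hT3.2⟩
        have hcn' : {w : ℕ | G'.Adj u w ∧ G'.Adj v w}
            = {w : ℕ | G.Adj u w ∧ G.Adj v w} := by
          ext w
          simp only [Set.mem_setOf_eq]
          by_cases hw : w = m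
          · rw [hw]
            constructor
            · rintro ⟨h1, h2⟩
              exact absurd ⟨(hAm u).1 h1.symm, (hAm v).1 h2.symm⟩ hUV
            · rintro ⟨h1, -⟩
              exact absurd (hb u m h1).2 (lt_irrefl m)
          · rw [hold u w hum hw, hold v w hvm hw]
        have hemb' : embeddedness G' u v = embeddedness G u v := by
          unfold embeddedness; rw [hcn']
        rw [hsplit, hempty, Set.image_empty, Set.union_empty, hemb']
        exact hedge u v huv
    · -- u = m, v ∈ K
      obtain ⟨hc, he⟩ := hnew v hvK
      rw [hueq, hc, he]
      obtain ⟨j, rfl⟩ : ∃ j, k = j + 3 := ⟨k - 3, by omega⟩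
      simp only [Nat.add_sub_cancel, show j + 3 - 1 = j + 2 from rfl,
        show j + 3 - 2 = j + 1 from rfl]
      ring
    · -- v = m, u ∈ K
      obtain ⟨hc, he⟩ := hnew u huK
      rw [hveq]
      have hswap : {s : Finset ℕ | G'.IsNClique k s ∧ u ∈ s ∧ m ∈ s}
          = {s : Finset ℕ | G'.IsNClique k s ∧ m ∈ s ∧ u ∈ s} := by
        ext s; simp only [Set.mem_setOf_eq]; tauto
      have hembswap : embeddedness G' u m = embeddedness G' m u := by
        unfold embeddedness; congr 1; ext w; exact and_comm
      rw [hswap, hembswap, hc, he]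
      obtain ⟨j, rfl⟩ : ∃ j, k = j + 3 := ⟨k - 3, by omega⟩
      simp only [Nat.add_sub_cancel, show j + 3 - 1 = j + 2 from rfl,
        show j + 3 - 2 = j + 1 from rfl]
      ring

lemma ktree_base (k : ℕ) (hk : 2 < k) (G : SimpleGraph ℕ)
    (hGk : ∀ u v, G.Adj u v ↔ u ≠ v ∧ u < k ∧ v < k) :
    (∀ u v, G.Adj u v → u < k ∧ v < k) ∧
    {s : Finset ℕ | G.IsNClique k s}.ncard = (k - k) * k + 1 ∧
    ∀ u v, G.Adj u v →
      {s : Finset ℕ | G.IsNClique k s ∧ u ∈ s ∧ v ∈ s}.ncard + (k-1)*(k-3)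
        = (k-2) * embeddedness G u v := by
  have hb : ∀ u v, G.Adj u v → u < k ∧ v < k := fun u v h => ((hGk u v).1 h).2
  have hrange : G.IsNClique k (Finset.range k) := by
    constructor
    · intro x hx y hy hxy
      exact (hGk x y).2 ⟨hxy, Finset.mem_range.1 hx, Finset.mem_range.1 hy⟩
    · exact Finset.card_range k
  have hcl : {s : Finset ℕ | G.IsNClique k s} = {Finset.range k} := by
    ext s
    simp only [Set.mem_setOf_eq, Set.mem_singleton_iff]
    constructor
    · intro hs
      have hsub : s ⊆ Finset.range k := fun x hx =>
        Finset.mem_range.2 ((by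
          obtain ⟨y, hy, hyx⟩ := Finset.exists_mem_ne (by rw [hs.2]; omega) x
          exact (hb x y (hs.1 hx hy (Ne.symm hyx))).1))
      exact Finset.eq_of_subset_of_card_le hsub (by rw [hs.2, Finset.card_range])
    · rintro rfl; exact hrange
  refine ⟨hb, by rw [hcl]; simp, ?_⟩
  intro u v huv
  obtain ⟨hne, hu, hv⟩ := (hGk u v).1 huv
  have hcle : {s : Finset ℕ | G.IsNClique k s ∧ u ∈ s ∧ v ∈ s} = {Finset.range k} := by
    ext s
    simp only [Set.mem_setOf_eq, Set.mem_singleton_iff]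
    constructor
    · rintro ⟨hs, -, -⟩
      have : s ∈ {s : Finset ℕ | G.IsNClique k s} := hs
      rwa [hcl] at this
    · rintro rfl
      exact ⟨hrange, Finset.mem_range.2 hu, Finset.mem_range.2 hv⟩
  have hcn : {w : ℕ | G.Adj u w ∧ G.Adj v w}
      = ↑(((Finset.range k).erase u).erase v) := by
    ext w
    simp only [Set.mem_setOf_eq, hGk, Finset.coe_erase, Set.mem_diff,
      Finset.coe_erase, Set.mem_diff, Finset.coe_range, Set.mem_Iio,
      Set.mem_singleton_iff]
    constructor
    · rintro ⟨⟨h1, -, h2⟩, ⟨h3, -, -⟩⟩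
      exact ⟨⟨h2, Ne.symm h1⟩, Ne.symm h3⟩
    · rintro ⟨⟨h2, h1⟩, h3⟩
      exact ⟨⟨Ne.symm h1, hu, h2⟩, ⟨Ne.symm h3, hv, h2⟩⟩
  have hemb : embeddedness G u v = k - 2 := by
    unfold embeddedness
    rw [hcn, Set.ncard_coe_finset]
    rw [Finset.card_erase_of_mem (Finset.mem_erase.2 ⟨Ne.symm hne, Finset.mem_range.2 hv⟩),
      Finset.card_erase_of_mem (Finset.mem_range.2 hu), Finset.card_range]
    omega
  rw [hcle, hemb, Set.ncard_singleton]
  obtain ⟨j, rfl⟩ : ∃ j, k = j + 3 := ⟨k - 3, by omega⟩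
  simp only [Nat.add_sub_cancel, show j + 3 - 1 = j + 2 from rfl,
    show j + 3 - 2 = j + 1 from rfl]
  ring


lemma ktree_main (k n : ℕ) (hk : 2 < k) (G : ℕ → SimpleGraph ℕ)
    (hG : KTreeProcess k n G) :
    ∀ m, k ≤ m → m ≤ n →
      (∀ u v, (G m).Adj u v → u < m ∧ v < m) ∧
      {s : Finset ℕ | (G m).IsNClique k s}.ncard = (m - k) * k + 1 ∧
      ∀ u v, (G m).Adj u v →
        {s : Finset ℕ | (G m).IsNClique k s ∧ u ∈ s ∧ v ∈ s}.ncard + (k-1)*(k-3)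
          = (k-2) * embeddedness (G m) u v := by
  intro m hkm
  induction m, hkm using Nat.le_induction with
  | base => intro _; exact ktree_base k hk (G k) hG.1
  | succ m hkm ih =>
    intro hm1n
    obtain ⟨hb, hcard, hedge⟩ := ih (by omega)
    obtain ⟨K, hKsub, hKcl, hA⟩ := hG.2 m hkm (by omega)
    exact step_main hk hkm hb hcard hedge hKsub hKcl hA

/-- The probability that a `k`-clique of `G n`, chosen uniformly at random from the
set of all `k`-cliques of `G n`, contains both endpoints of the edge `{u, v}`. -/
theorem prob_uniform_clique_contains_edge (k n : ℕ) (hk : 2 < k) (hn : k ≤ n)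
    (G : ℕ → SimpleGraph ℕ) (hG : KTreeProcess k n G)
    (u v : ℕ) (huv : (G n).Adj u v) :
    ({s : Finset ℕ | (G n).IsNClique k s ∧ u ∈ s ∧ v ∈ s}.ncard : ℝ) /
      ({s : Finset ℕ | (G n).IsNClique k s}.ncard : ℝ) =
    (((k : ℝ) - 2) * (embeddedness (G n) u v : ℝ) - ((k : ℝ) - 1) * ((k : ℝ) - 3)) /
      (((n : ℝ) - (k : ℝ)) * (k : ℝ) + 1) := by
  obtain ⟨hb, hcard, hedge⟩ := ktree_main k n hk G hG n hn le_rfl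
  have e1 : (({s : Finset ℕ | (G n).IsNClique k s ∧ u ∈ s ∧ v ∈ s}.ncard : ℝ))
      = ((k:ℝ)-2) * (embeddedness (G n) u v : ℝ) - ((k:ℝ)-1)*((k:ℝ)-3) := by
    have h1 := hedge u v huv
    have h2 := congrArg (fun x : ℕ => (x : ℝ)) h1
    simp only [Nat.cast_add, Nat.cast_mul,
      Nat.cast_sub (by omega : 1 ≤ k), Nat.cast_sub (by omega : 2 ≤ k),
      Nat.cast_sub (by omega : 3 ≤ k), Nat.cast_one, Nat.cast_ofNat] at h2
    linarith
  have e2 : (({s : Finset ℕ | (G n).IsNClique k s}.ncard : ℝ))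
      = ((n:ℝ)-(k:ℝ))*(k:ℝ)+1 := by
    rw [hcard]
    simp only [Nat.cast_add, Nat.cast_mul, Nat.cast_sub hn, Nat.cast_one]
  rw [e1, e2]
end

section
/- Let k > 2 be an integer, set b = (k − 1)(k − 3), and for integers j and n let p_j(n) = ((k − 2)·j − b) / ((n − k)·k + 1). Let d ≥ k be an integer, let β′ be a real number, and let s, t : ℕ → ℝ be sequences such that for some N > k and all n ≥ N: t(n + 1) = p_{d−1}(n)·s(n) + (1 − p_d(n))·t(n), and such that the sequence n ↦ s(n) − β′·n is bounded. Then the sequence n ↦ t(n) − β·n is bounded, where β = (((k − 2)(d − 1) − b) / ((k − 2)·d − b + k)) · β′. -/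
set_option maxHeartbeats 1000000


/-- `p k j n` is the probability that a uniformly chosen `k`-clique of the `n`-vertex
random `k`-tree contains a given edge of embeddedness `j`:
`p k j n = ((k - 2)·j - (k - 1)(k - 3)) / ((n - k)·k + 1)`. -/
noncomputable def p (k j n : ℕ) : ℝ :=
  (((k : ℝ) - 2) * (j : ℝ) - ((k : ℝ) - 1) * ((k : ℝ) - 3)) /
    (((n : ℝ) - (k : ℝ)) * (k : ℝ) + 1)

theorem recursion_induction_step (k : ℕ) (hk : 2 < k) (d : ℕ) (hd : k ≤ d)
    (β' : ℝ) (s t : ℕ → ℝ) (N : ℕ) (hN : k < N)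
    (hrec : ∀ n, N ≤ n → t (n + 1) = p k (d - 1) n * s n + (1 - p k d n) * t n)
    (hs : ∃ C : ℝ, ∀ n : ℕ, |s n - β' * (n : ℝ)| ≤ C) :
    ∃ C : ℝ, ∀ n : ℕ,
      |t n - ((((k : ℝ) - 2) * ((d : ℝ) - 1) - ((k : ℝ) - 1) * ((k : ℝ) - 3)) /
          (((k : ℝ) - 2) * (d : ℝ) - ((k : ℝ) - 1) * ((k : ℝ) - 3) + (k : ℝ)) * β') *
        (n : ℝ)| ≤ C := by
  obtain ⟨C, hC⟩ := hs
  have hC0 : 0 ≤ C := le_trans (abs_nonneg _) (hC 0)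
  have hk3 : (3:ℝ) ≤ (k:ℝ) := by exact_mod_cast hk
  have hdk : (k:ℝ) ≤ (d:ℝ) := by exact_mod_cast hd
  have hNk : (k:ℝ) + 1 ≤ (N:ℝ) := by exact_mod_cast hN
  set b : ℝ := ((k : ℝ) - 1) * ((k : ℝ) - 3) with hbdef
  set A : ℝ := ((k : ℝ) - 2) * ((d : ℝ) - 1) - b with hAdef
  set B : ℝ := ((k : ℝ) - 2) * (d : ℝ) - b with hBdef
  have hApos : 0 < A := by rw [hAdef, hbdef]; nlinarith
  have hBA : B = A + ((k:ℝ) - 2) := by rw [hAdef, hBdef]; ring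
  have hBpos : 0 < B := by rw [hBA]; nlinarith
  have hBk : 0 < B + (k:ℝ) := by nlinarith
  set β : ℝ := A / (B + (k:ℝ)) * β' with hβdef
  have hBk' : (0:ℝ) < ((k:ℝ)-2)*(d:ℝ) - ((k:ℝ)-1)*((k:ℝ)-3) + (k:ℝ) := by
    rw [hBdef, hbdef] at hBk; exact hBk
  have hD : ∀ n : ℕ, N ≤ n → (0:ℝ) < ((n:ℝ) - k) * k + 1 := by
    intro n hn
    have hn' : (N:ℝ) ≤ n := by exact_mod_cast hn
    nlinarith
  have hd1 : ((d-1:ℕ):ℝ) = (d:ℝ) - 1 := by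
    have h1 : 1 ≤ d := by omega
    rw [Nat.cast_sub h1, Nat.cast_one]
  have key : ∀ n : ℕ, N ≤ n →
      t (n+1) - β * ((n:ℝ)+1) =
        (1 - B / (((n:ℝ)-k)*k+1)) * (t n - β * n)
        + (A / (((n:ℝ)-k)*k+1)) * (s n - β' * n)
        + β * ((k:ℝ)^2 - 1) / (((n:ℝ)-k)*k+1) := by
    intro n hn
    have hDn := hD n hn
    have hDne : (((n:ℝ)-k)*k+1) ≠ 0 := ne_of_gt hDn
    rw [hrec n hn]
    unfold p
    rw [hd1, hβdef, hAdef, hBdef, hbdef]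
    have hBkne := ne_of_gt hBk'
    generalize hDeq : (((n:ℝ)-k)*k+1) = D at hDne ⊢
    field_simp
    subst hDeq
    ring
  have hq : ∀ n : ℕ, N + k*d ≤ n → B ≤ ((n:ℝ)-k)*k+1 := by
    intro n hn
    have hn' : (N:ℝ) + (k:ℝ)*(d:ℝ) ≤ (n:ℝ) := by exact_mod_cast hn
    rw [hBdef, hbdef]
    nlinarith
  set N₁ : ℕ := N + k*d with hN₁
  set M₀ : ℝ := (A*C + |β| *((k:ℝ)^2-1))/B with hM₀def
  have hk21 : (0:ℝ) ≤ (k:ℝ)^2 - 1 := by nlinarith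
  have hM₀0 : 0 ≤ M₀ :=
    div_nonneg (add_nonneg (mul_nonneg hApos.le hC0)
      (mul_nonneg (abs_nonneg _) hk21)) hBpos.le
  set M : ℝ := max (|t N₁ - β * (N₁:ℝ)|) M₀ with hMdef
  have hM0 : 0 ≤ M := le_trans (abs_nonneg _) (le_max_left _ _)
  have hbound : ∀ m : ℕ, |t (N₁+m) - β * ((N₁+m : ℕ):ℝ)| ≤ M := by
    intro m
    induction m with
    | zero =>
      simp only [Nat.add_zero]
      exact le_max_left _ _
    | succ m ih =>
      have hn : N ≤ N₁ + m := by omega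
      have hDn := hD (N₁+m) hn
      have hk' := key (N₁+m) hn
      have hqn : B ≤ (((N₁+m:ℕ):ℝ)-k)*k+1 := hq (N₁+m) (by omega)
      set Dn : ℝ := (((N₁+m:ℕ):ℝ)-k)*k+1 with hDndef
      have h1 : 0 ≤ 1 - B/Dn := by
        have : B/Dn ≤ 1 := (div_le_one hDn).mpr hqn
        linarith
      have h2 : 0 < B/Dn := div_pos hBpos hDn
      have hA2 : 0 ≤ A/Dn := le_of_lt (div_pos hApos hDn)
      have heq : t (N₁+(m+1)) - β * ((N₁+(m+1):ℕ):ℝ)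
          = (1 - B/Dn) * (t (N₁+m) - β * ((N₁+m:ℕ):ℝ))
            + (A/Dn) * (s (N₁+m) - β' * ((N₁+m:ℕ):ℝ))
            + β * ((k:ℝ)^2 - 1) / Dn := by
        have hcast : ((N₁+(m+1):ℕ):ℝ) = ((N₁+m:ℕ):ℝ) + 1 := by push_cast; ring
        rw [hcast, show N₁+(m+1) = (N₁+m)+1 from rfl]
        exact hk'
      rw [heq]
      have htri : |(1 - B/Dn) * (t (N₁+m) - β * ((N₁+m:ℕ):ℝ))
            + (A/Dn) * (s (N₁+m) - β' * ((N₁+m:ℕ):ℝ))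
            + β * ((k:ℝ)^2 - 1) / Dn|
          ≤ (1 - B/Dn) * |t (N₁+m) - β * ((N₁+m:ℕ):ℝ)|
            + (A/Dn) * |s (N₁+m) - β' * ((N₁+m:ℕ):ℝ)|
            + |β| * ((k:ℝ)^2 - 1) / Dn := by
        calc _ ≤ |(1 - B/Dn) * (t (N₁+m) - β * ((N₁+m:ℕ):ℝ))|
              + |(A/Dn) * (s (N₁+m) - β' * ((N₁+m:ℕ):ℝ))|
              + |β * ((k:ℝ)^2 - 1) / Dn| := abs_add_three _ _ _
          _ = _ := by
              have e1 : |(1 - B/Dn) * (t (N₁+m) - β * ((N₁+m:ℕ):ℝ))|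
                  = (1 - B/Dn) * |t (N₁+m) - β * ((N₁+m:ℕ):ℝ)| := by
                rw [abs_mul, abs_of_nonneg h1]
              have e2 : |(A/Dn) * (s (N₁+m) - β' * ((N₁+m:ℕ):ℝ))|
                  = (A/Dn) * |s (N₁+m) - β' * ((N₁+m:ℕ):ℝ)| := by
                rw [abs_mul, abs_of_nonneg hA2]
              have e3 : |β * ((k:ℝ)^2 - 1) / Dn| = |β| * ((k:ℝ)^2 - 1) / Dn := by
                rw [abs_div, abs_mul, abs_of_nonneg hk21, abs_of_pos hDn]
              rw [e1, e2, e3]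
      have hstep : (A/Dn) * C + |β| * ((k:ℝ)^2 - 1) / Dn = (B/Dn) * M₀ := by
        rw [hM₀def]
        field_simp
      have hM₀M : M₀ ≤ M := le_max_right _ _
      have := hC (N₁+m)
      calc |(1 - B/Dn) * (t (N₁+m) - β * ((N₁+m:ℕ):ℝ))
            + (A/Dn) * (s (N₁+m) - β' * ((N₁+m:ℕ):ℝ))
            + β * ((k:ℝ)^2 - 1) / Dn|
          ≤ (1 - B/Dn) * |t (N₁+m) - β * ((N₁+m:ℕ):ℝ)|
            + (A/Dn) * |s (N₁+m) - β' * ((N₁+m:ℕ):ℝ)|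
            + |β| * ((k:ℝ)^2 - 1) / Dn := htri
        _ ≤ (1 - B/Dn) * M + (A/Dn) * C + |β| * ((k:ℝ)^2 - 1) / Dn := by
            have := mul_le_mul_of_nonneg_left ih h1
            have := mul_le_mul_of_nonneg_left (hC (N₁+m)) hA2
            linarith
        _ = (1 - B/Dn) * M + (B/Dn) * M₀ := by rw [add_assoc, hstep]
        _ ≤ M := by nlinarith [mul_le_mul_of_nonneg_left hM₀M h2.le]
  refine ⟨M + ∑ i ∈ Finset.range N₁, |t i - β * (i:ℝ)|, fun n => ?_⟩
  have hsum0 : 0 ≤ ∑ i ∈ Finset.range N₁, |t i - β * (i:ℝ)| :=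
    Finset.sum_nonneg fun i _ => abs_nonneg _
  by_cases hcase : n < N₁
  · have := Finset.single_le_sum (f := fun i => |t i - β*(i:ℝ)|)
      (fun i _ => abs_nonneg _) (Finset.mem_range.mpr hcase)
    linarith
  · obtain ⟨m, rfl⟩ := Nat.exists_eq_add_of_le (not_lt.mp hcase)
    have := hbound m
    linarith
end

section
/- Let k > 2 be an integer, set b = (k − 1)(k − 3), and let p(n) = ((k − 2)(k − 1) − b) / ((n − k)·k + 1). Let t : ℕ → ℝ be a sequence such that for some N > k and all n ≥ N: t(n + 1) = (1 − p(n))·t(n) + k. Then the sequence n ↦ t(n) − (k²/(2k − 1))·n is bounded. -/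
theorem recursion_base_case (k : ℕ) (hk : 2 < k) (t : ℕ → ℝ) (N : ℕ) (hN : k < N)
    (hrec : ∀ n, N ≤ n →
      t (n + 1) =
        (1 - (((k : ℝ) - 2) * ((k : ℝ) - 1) - ((k : ℝ) - 1) * ((k : ℝ) - 3)) /
            (((n : ℝ) - (k : ℝ)) * (k : ℝ) + 1)) * t n + (k : ℝ)) :
    ∃ C : ℝ, ∀ n : ℕ, |t n - (k : ℝ) ^ 2 / (2 * (k : ℝ) - 1) * (n : ℝ)| ≤ C := by
  have hk2 : (2:ℝ) < (k:ℝ) := by exact_mod_cast hk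
  set c : ℝ := (k:ℝ)^2 / (2*(k:ℝ)-1) with hc
  set M : ℝ := ((k:ℝ)+1) * ((k:ℝ) - c) with hM
  set e : ℕ → ℝ := fun n => t n - c * n with he
  set p : ℕ → ℝ := fun n => ((k:ℝ)-1) / (((n:ℝ)-(k:ℝ))*(k:ℝ)+1) with hp
  have h2k : (0:ℝ) < 2*(k:ℝ)-1 := by linarith
  have hden : ∀ n : ℕ, N ≤ n → (0:ℝ) < ((n:ℝ)-(k:ℝ))*(k:ℝ)+1 := by
    intro n hn
    have : (k:ℝ) + 1 ≤ (n:ℝ) := by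
      have : k + 1 ≤ n := le_trans hN hn
      exact_mod_cast this
    nlinarith
  have hpub : ∀ n : ℕ, N ≤ n → 0 ≤ p n ∧ p n ≤ 1 := by
    intro n hn
    have hd := hden n hn
    have hnk : (k:ℝ) + 1 ≤ (n:ℝ) := by
      have : k + 1 ≤ n := le_trans hN hn
      exact_mod_cast this
    constructor
    · apply div_nonneg (by linarith) (le_of_lt hd)
    · rw [div_le_one hd]; nlinarith
  have hMpos : 0 ≤ M := by
    rw [hM, hc]
    have : (k:ℝ) - (k:ℝ)^2/(2*(k:ℝ)-1) = (k:ℝ)*((k:ℝ)-1)/(2*(k:ℝ)-1) := by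
      have h2k' : (k:ℝ)*2-1 ≠ 0 := by linarith
      field_simp; ring
    rw [this]
    exact mul_nonneg (by linarith) (div_nonneg (by nlinarith) (le_of_lt h2k))
  have key : ∀ n : ℕ, N ≤ n → e (n+1) = (1 - p n) * e n + p n * (-M) := by
    intro n hn
    have hd := (hden n hn).ne'
    simp only [he, hp, hrec n hn, hM, hc]
    push_cast
    have h2k' : (k:ℝ)*2-1 ≠ 0 := by linarith
    have hd' : (k:ℝ) * ((n:ℝ) - (k:ℝ)) + 1 ≠ 0 := by rw [mul_comm]; exact hd
    field_simp
    ring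
  -- bound for n ≥ N
  have step : ∀ n : ℕ, N ≤ n → |e n| ≤ max |e N| M → |e (n+1)| ≤ max |e N| M := by
    intro n hn hb
    have ⟨hp0, hp1⟩ := hpub n hn
    rw [key n hn]
    calc |(1 - p n) * e n + p n * (-M)| ≤ |(1 - p n) * e n| + |p n * (-M)| := abs_add_le _ _
      _ = (1 - p n) * |e n| + p n * M := by
          rw [abs_mul, abs_mul, abs_of_nonneg (by linarith : (0:ℝ) ≤ 1 - p n),
            abs_of_nonneg hp0, abs_neg, abs_of_nonneg hMpos]
      _ ≤ (1 - p n) * max |e N| M + p n * max |e N| M := by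
          have h1 := le_max_right |e N| M
          have h1p : (0:ℝ) ≤ 1 - p n := by linarith
          gcongr
      _ = max |e N| M := by ring
  have bigN : ∀ n : ℕ, N ≤ n → |e n| ≤ max |e N| M := by
    intro n hn
    induction n with
    | zero => omega
    | succ m ih =>
      rcases Nat.lt_or_ge m N with h | h
      · have : m + 1 = N := by omega
        rw [this]; exact le_max_left _ _
      · exact step m h (ih h)
  -- global bound
  set B : ℝ := (Finset.range (N+1)).sup' (by simp) (fun n => |e n|) with hB
  refine ⟨max B M, fun n => ?_⟩
  have : |e n| ≤ max B M := by
    rcases Nat.lt_or_ge n (N+1) with h | h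
    · exact le_trans (Finset.le_sup' (fun n => |e n|) (Finset.mem_range.mpr h)) (le_max_left _ _)
    · have hEN : |e N| ≤ B := Finset.le_sup' (fun n => |e n|) (Finset.mem_range.mpr (by omega))
      have := bigN n (by omega)
      exact le_trans this (max_le (le_trans hEN (le_max_left _ _)) (le_max_right _ _))
  simpa [he, mul_comm] using this
end

section
/- Let β be a real number and let s, t : ℕ → ℝ be sequences such that for some N ≥ 2 and all n ≥ N: t(n + 1) = (1/(2n − 3))·s(n) + (1 − 1/(2n − 3))·t(n), and such that the sequence n ↦ s(n) − β·n is bounded. Then the sequence n ↦ t(n) − (β/3)·n is bounded. -/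
theorem two_tree_induction_step (β : ℝ) (s t : ℕ → ℝ) (N : ℕ) (hN : 2 ≤ N)
    (hrec : ∀ n, N ≤ n →
      t (n + 1) = (1 / (2 * (n : ℝ) - 3)) * s n + (1 - 1 / (2 * (n : ℝ) - 3)) * t n)
    (hs : ∃ C : ℝ, ∀ n : ℕ, |s n - β * (n : ℝ)| ≤ C) :
    ∃ C : ℝ, ∀ n : ℕ, |t n - β / 3 * (n : ℝ)| ≤ C := by
  obtain ⟨C, hC⟩ := hs
  set e : ℕ → ℝ := fun n => t n - β / 3 * n with he
  have hC0 : 0 ≤ C := le_trans (abs_nonneg _) (hC 0)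
  set K : ℝ := |β| + C with hK
  have hK0 : 0 ≤ K := by positivity
  set M : ℝ := max (|e N|) K with hM
  have hMK : K ≤ M := le_max_right _ _
  have main : ∀ n, N ≤ n → |e n| ≤ M := by
    intro n hn
    induction hn with
    | refl => exact le_max_left _ _
    | @step m h ih =>
      have hm2 : (2:ℝ) ≤ (m:ℝ) := by exact_mod_cast le_trans hN h
      have hpos : (0:ℝ) < 2 * (m:ℝ) - 3 := by linarith
      have hne : (2:ℝ) * (m:ℝ) - 3 ≠ 0 := ne_of_gt hpos
      set a : ℝ := 1 / (2 * (m:ℝ) - 3) with ha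
      have ha0 : 0 < a := by rw [ha]; positivity
      have ha1 : a ≤ 1 := by rw [ha, div_le_one hpos]; linarith
      have hrec' := hrec m h
      have key : e (m + 1) = (1 - a) * e m + a * (β + (s m - β * m)) := by
        simp only [he, ha, hrec']
        push_cast
        field_simp
        ring
      have hem := ih
      have hb : |β + (s m - β * m)| ≤ K := by
        calc |β + (s m - β * m)| ≤ |β| + |s m - β * m| := abs_add_le _ _
          _ ≤ |β| + C := by linarith [hC m]
      calc |e (m + 1)| ≤ (1 - a) * |e m| + a * |β + (s m - β * m)| := by
            rw [key]
            refine le_trans (abs_add_le _ _) ?_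
            rw [abs_mul, abs_mul, abs_of_nonneg (by linarith : (0:ℝ) ≤ 1 - a),
              abs_of_pos ha0]
        _ ≤ (1 - a) * M + a * M := by
            have h1 : (1 - a) * |e m| ≤ (1 - a) * M :=
              mul_le_mul_of_nonneg_left hem (by linarith)
            have h2 : a * |β + (s m - β * m)| ≤ a * M :=
              mul_le_mul_of_nonneg_left (le_trans hb hMK) (le_of_lt ha0)
            linarith
        _ = M := by ring
  have hM0 : 0 ≤ M := le_trans hK0 hMK
  refine ⟨M + ∑ k ∈ Finset.range N, |e k|, fun n => ?_⟩
  have hsum0 : 0 ≤ ∑ k ∈ Finset.range N, |e k| :=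
    Finset.sum_nonneg fun k _ => abs_nonneg _
  rcases Nat.lt_or_ge n N with h | h
  · have hle : |e n| ≤ ∑ k ∈ Finset.range N, |e k| :=
      Finset.single_le_sum (f := fun k => |e k|) (fun k _ => abs_nonneg _) (Finset.mem_range.mpr h)
    calc |t n - β / 3 * n| = |e n| := rfl
      _ ≤ M + ∑ k ∈ Finset.range N, |e k| := by linarith
  · calc |t n - β / 3 * n| = |e n| := rfl
      _ ≤ M + ∑ k ∈ Finset.range N, |e k| := by linarith [main n h]
end

section
/- Let t : ℕ → ℝ be a sequence such that for some N ≥ 2 and all n ≥ N: t(n + 1) = (1 − 1/(2n − 3))·t(n) + 2. Then the sequence n ↦ t(n) − (4/3)·n is bounded. -/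
theorem two_tree_base_case (t : ℕ → ℝ) (N : ℕ) (hN : 2 ≤ N)
    (hrec : ∀ n, N ≤ n →
      t (n + 1) = (1 - 1 / (2 * (n : ℝ) - 3)) * t n + 2) :
    ∃ C : ℝ, ∀ n : ℕ, |t n - 4 / 3 * (n : ℝ)| ≤ C := by
  set e : ℕ → ℝ := fun n => t n - 4 / 3 * n with he
  have key : ∀ n, N ≤ n → |e n| ≤ max (|e N|) 2 := by
    intro n hn
    induction n with
    | zero => exact absurd hn (by omega)
    | succ n ih =>
      rcases eq_or_lt_of_le hn with h | h
      · rw [← h]; exact le_max_left _ _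
      · have hn' : N ≤ n := by omega
        have ihn := ih hn'
        have h2 : (2:ℕ) ≤ n := le_trans hN hn'
        have hd : (1:ℝ) ≤ 2*n - 3 := by
          have : (2:ℝ) ≤ n := by exact_mod_cast h2
          linarith
        have hdpos : (0:ℝ) < 2*(n:ℝ) - 3 := by linarith
        have erec : e (n+1) = (1 - 1/(2*(n:ℝ)-3)) * e n - 2/(2*(n:ℝ)-3) := by
          simp only [he]
          rw [hrec n hn']
          push_cast
          field_simp
          ring
        have ha1 : 1/(2*(n:ℝ)-3) ≤ 1 := by
          rw [div_le_one hdpos]; linarith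
        have ha0 : 0 < 1/(2*(n:ℝ)-3) := by positivity
        have hM2 : (2:ℝ) ≤ max (|e N|) 2 := le_max_right _ _
        have hb := abs_le.mp ihn
        have htwo : 2/(2*(n:ℝ)-3) = 2*(1/(2*(n:ℝ)-3)) := by ring
        have hprod : (1/(2*(n:ℝ)-3)) * 2 ≤ (1/(2*(n:ℝ)-3)) * (max (|e N|) 2) :=
          mul_le_mul_of_nonneg_left hM2 ha0.le
        rw [abs_le]
        constructor
        · rw [erec, htwo]
          nlinarith [mul_le_mul_of_nonneg_left hb.1 (by linarith : (0:ℝ) ≤ 1 - 1/(2*(n:ℝ)-3))]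
        · rw [erec, htwo]
          nlinarith [mul_le_mul_of_nonneg_left hb.2 (by linarith : (0:ℝ) ≤ 1 - 1/(2*(n:ℝ)-3))]
  refine ⟨max ((Finset.range (N+1)).sup' ⟨0, by simp⟩ (fun k => |e k|)) 2, ?_⟩
  intro n
  by_cases hn : n ≤ N
  · exact le_max_of_le_left (Finset.le_sup' (fun k => |e k|)
      (show n ∈ Finset.range (N+1) from Finset.mem_range.mpr (by omega)))
  · refine le_trans (key n (by omega)) (max_le_max ?_ le_rfl)
    exact Finset.le_sup' (fun k => |e k|)
      (show N ∈ Finset.range (N+1) from Finset.mem_range.mpr (by omega))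
end
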